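/- Every lattice L with more than one element has a proper congruence-preserving extensive extension; that is, there exist a lattice K and a non-surjective lattice embedding f : L → K such that (1) for every congruence Θ of L there is exactly one congruence Φ of K with Φ(f x, f y) ↔ Θ(x, y) for all x, y ∈ L, and (2) every element k ∈ K satisfies f(u) ≤ k ≤ f(v) for some u, v ∈ L (so the convex sublattice of K generated by the image of L is all of K). -/

import Mathlib

universe u

/-- A *congruence* of a lattice: an equivalence relation compatible with
joins and meets. -/
def IsLatticeCongruence {α : Type*} [Lattice α] (Θ : α → α → Prop) : Prop :=
  Equivalence Θ ∧
    ∀ a b c d : α, Θ a b → Θ c d → Θ (a ⊔ c) (b ⊔ d) ∧ Θ (a ⊓ c) (b ⊓ d)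

/-!
The extension is Grätzer and Schmidt's lattice of Boolean triples: the triples `(x, y, z)` with
`x = (x ⊔ y) ⊓ (x ⊔ z)`, `y = (y ⊔ x) ⊓ (y ⊔ z)`, `z = (z ⊔ x) ⊓ (z ⊔ y)`, into which `L` embeds
diagonally. Every triple lies between the diagonal elements of the meet and of the join of its
components, and a congruence `Θ` of `L` extends componentwise.

This is the only extension. Given two triples, take `w ≤ W` bounding all their components. In the
interval between the diagonal elements `w³` and `W³`, the three corners `(W, w, w)`, `(w, W, w)`,
`(w, w, W)` behave like the atoms of the cube `2³`: a triple `(x, y, z)` is the join of the meets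
`x³ ⊓ (W, w, w)`, `y³ ⊓ (w, W, w)`, `z³ ⊓ (w, w, W)`, and conversely `x³` is a lattice polynomial
of `(x, y, z)` with the corners as constants. Congruences are compatible with lattice polynomials,
so any congruence extending `Θ` relates two triples exactly when `Θ` relates their components.
-/

namespace IsLatticeCongruence

variable {α : Type*} [Lattice α] {Θ : α → α → Prop}

theorem refl (hΘ : IsLatticeCongruence Θ) (a : α) : Θ a a := hΘ.1.refl a

theorem sup (hΘ : IsLatticeCongruence Θ) {a b c d : α} (hab : Θ a b) (hcd : Θ c d) :
    Θ (a ⊔ c) (b ⊔ d) :=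
  (hΘ.2 a b c d hab hcd).1

theorem inf (hΘ : IsLatticeCongruence Θ) {a b c d : α} (hab : Θ a b) (hcd : Θ c d) :
    Θ (a ⊓ c) (b ⊓ d) :=
  (hΘ.2 a b c d hab hcd).2

theorem inf_sup_inf_sup_inf (hΘ : IsLatticeCongruence Θ) {a b : α} (hab : Θ a b) (c d e : α) :
    Θ (a ⊓ c ⊔ (a ⊓ c ⊔ d) ⊓ e) (b ⊓ c ⊔ (b ⊓ c ⊔ d) ⊓ e) :=
  have hc := hΘ.inf hab (hΘ.refl c)
  hΘ.sup hc (hΘ.inf (hΘ.sup hc (hΘ.refl d)) (hΘ.refl e))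

end IsLatticeCongruence

namespace BooleanTriple

variable {L : Type*} [Lattice L]

def closure : ClosureOperator (L × L × L) := .mk'
  (fun t => ((t.1 ⊔ t.2.1) ⊓ (t.1 ⊔ t.2.2), (t.2.1 ⊔ t.1) ⊓ (t.2.1 ⊔ t.2.2),
    (t.2.2 ⊔ t.1) ⊓ (t.2.2 ⊔ t.2.1)))
  (fun _ _ ⟨hx, hy, hz⟩ => ⟨by dsimp only; gcongr, by dsimp only; gcongr, by dsimp only; gcongr⟩)
  (fun _ => ⟨le_inf le_sup_left le_sup_left, le_inf le_sup_left le_sup_left,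
    le_inf le_sup_left le_sup_left⟩)
  (fun _ => by
    refine ⟨?_, ?_, ?_⟩ <;> refine inf_le_inf (sup_le ?_ ?_) (sup_le ?_ ?_) <;> simp [sup_comm])

@[simp]
theorem closure_apply (x y z : L) :
    closure (x, y, z) = ((x ⊔ y) ⊓ (x ⊔ z), (y ⊔ x) ⊓ (y ⊔ z), (z ⊔ x) ⊓ (z ⊔ y)) :=
  rfl

variable (L) in
abbrev _root_.BooleanTriples : Type _ := (closure (L := L)).Closeds

instance : Lattice (BooleanTriples L) := (closure (L := L)).gi.liftLattice

@[simp]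
theorem coe_inf (s t : BooleanTriples L) : (↑(s ⊓ t) : L × L × L) = ↑s ⊓ ↑t := rfl

@[simp]
theorem coe_sup (s t : BooleanTriples L) : (↑(s ⊔ t) : L × L × L) = closure (↑s ⊔ ↑t) := rfl

theorem isClosed_diag (c : L) : closure.IsClosed (c, c, c) := by
  simp [ClosureOperator.isClosed_iff_closure_le]

def diag : LatticeHom L (BooleanTriples L) where
  toFun c := ⟨(c, c, c), isClosed_diag c⟩
  map_sup' _ _ := Subtype.ext (by simp)
  map_inf' _ _ := rfl

@[simp]
theorem coe_diag (c : L) : (diag c : L × L × L) = (c, c, c) := rfl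

theorem diag_injective : Function.Injective (diag (L := L)) :=
  fun _ _ h => congrArg (fun s : BooleanTriples L => s.1.1) h

theorem not_surjective_diag [Nontrivial L] : ¬ Function.Surjective (diag (L := L)) := by
  intro h
  have hle (a b : L) : a ≤ b := by
    obtain ⟨c, hc⟩ := h (closure.toCloseds (a, b, b))
    obtain ⟨hca, hcb⟩ : c = a ⊔ b ∧ c = b := by
      simpa [ClosureOperator.toCloseds, Prod.ext_iff] using congrArg Subtype.val hc
    exact le_sup_left.trans (hca.symm.trans hcb).le
  obtain ⟨a, b, hab⟩ := exists_pair_ne L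
  exact hab (le_antisymm (hle a b) (hle b a))

theorem diag_inf_le (s : BooleanTriples L) : diag (s.1.1 ⊓ s.1.2.1 ⊓ s.1.2.2) ≤ s :=
  ⟨inf_le_left.trans inf_le_left, inf_le_left.trans inf_le_right, inf_le_right⟩

theorem le_diag_sup (s : BooleanTriples L) : s ≤ diag (s.1.1 ⊔ s.1.2.1 ⊔ s.1.2.2) :=
  ⟨le_sup_left.trans le_sup_left, le_sup_right.trans le_sup_left, le_sup_right⟩

section Frame

variable {w W : L}

theorem eq_sup_diag_inf (s : BooleanTriples L) (hw : diag w ≤ s) (hW : s ≤ diag W) :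
    s = diag s.1.1 ⊓ closure.toCloseds (W, w, w) ⊔ diag s.1.2.1 ⊓ closure.toCloseds (w, W, w) ⊔
      diag s.1.2.2 ⊓ closure.toCloseds (w, w, W) := by
  obtain ⟨⟨x, y, z⟩, hs⟩ := s
  obtain ⟨hwx, hwy, hwz⟩ : w ≤ x ∧ w ≤ y ∧ w ≤ z := hw
  obtain ⟨hxW, hyW, hzW⟩ : x ≤ W ∧ y ≤ W ∧ z ≤ W := hW
  have hwW := hwx.trans hxW
  apply Subtype.ext
  simp only [coe_sup, coe_inf, ClosureOperator.closure_sup_closure_left]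
  convert hs.closure_eq.symm using 2
  simp [ClosureOperator.toCloseds, hwx, hwy, hwz, hxW, hyW, hzW, hwW]

theorem diag_fst_eq (s : BooleanTriples L) (hw : diag w ≤ s) (hW : s ≤ diag W) :
    diag s.1.1 = s ⊓ closure.toCloseds (W, w, w) ⊔
      (s ⊓ closure.toCloseds (W, w, w) ⊔ closure.toCloseds (w, w, W)) ⊓
        closure.toCloseds (w, W, w) := by
  obtain ⟨⟨x, y, z⟩, _⟩ := s
  obtain ⟨hwx, hwy, hwz⟩ : w ≤ x ∧ w ≤ y ∧ w ≤ z := hw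
  obtain ⟨hxW, -, -⟩ : x ≤ W ∧ y ≤ W ∧ z ≤ W := hW
  apply Subtype.ext
  simp [ClosureOperator.toCloseds, hwx, hwy, hwz, hxW, hwx.trans hxW]

theorem diag_snd_fst_eq (s : BooleanTriples L) (hw : diag w ≤ s) (hW : s ≤ diag W) :
    diag s.1.2.1 = s ⊓ closure.toCloseds (w, W, w) ⊔
      (s ⊓ closure.toCloseds (w, W, w) ⊔ closure.toCloseds (w, w, W)) ⊓
        closure.toCloseds (W, w, w) := by
  obtain ⟨⟨x, y, z⟩, _⟩ := s
  obtain ⟨hwx, hwy, hwz⟩ : w ≤ x ∧ w ≤ y ∧ w ≤ z := hw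
  obtain ⟨-, hyW, -⟩ : x ≤ W ∧ y ≤ W ∧ z ≤ W := hW
  apply Subtype.ext
  simp [ClosureOperator.toCloseds, hwx, hwy, hwz, hyW, hwy.trans hyW]

theorem diag_snd_snd_eq (s : BooleanTriples L) (hw : diag w ≤ s) (hW : s ≤ diag W) :
    diag s.1.2.2 = s ⊓ closure.toCloseds (w, w, W) ⊔
      (s ⊓ closure.toCloseds (w, w, W) ⊔ closure.toCloseds (W, w, w)) ⊓
        closure.toCloseds (w, W, w) := by
  obtain ⟨⟨x, y, z⟩, _⟩ := s
  obtain ⟨hwx, hwy, hwz⟩ : w ≤ x ∧ w ≤ y ∧ w ≤ z := hw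
  obtain ⟨-, -, hzW⟩ : x ≤ W ∧ y ≤ W ∧ z ≤ W := hW
  apply Subtype.ext
  simp [ClosureOperator.toCloseds, hwx, hwy, hwz, hzW, hwz.trans hzW]

end Frame

section Congruence

def componentwise (Θ : L → L → Prop) (s t : BooleanTriples L) : Prop :=
  Θ s.1.1 t.1.1 ∧ Θ s.1.2.1 t.1.2.1 ∧ Θ s.1.2.2 t.1.2.2

variable {Θ : L → L → Prop}

theorem isLatticeCongruence_componentwise (hΘ : IsLatticeCongruence Θ) :
    IsLatticeCongruence (componentwise Θ) := by
  refine ⟨⟨fun _ => ⟨hΘ.refl _, hΘ.refl _, hΘ.refl _⟩,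
    fun ⟨h₁, h₂, h₃⟩ => ⟨hΘ.1.symm h₁, hΘ.1.symm h₂, hΘ.1.symm h₃⟩,
    fun ⟨h₁, h₂, h₃⟩ ⟨h₁', h₂', h₃'⟩ => ⟨hΘ.1.trans h₁ h₁', hΘ.1.trans h₂ h₂', hΘ.1.trans h₃ h₃'⟩⟩,
    ?_⟩
  rintro s t s' t' ⟨h₁, h₂, h₃⟩ ⟨h₁', h₂', h₃'⟩
  have j₁ := hΘ.sup h₁ h₁'
  have j₂ := hΘ.sup h₂ h₂'
  have j₃ := hΘ.sup h₃ h₃'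
  exact ⟨⟨hΘ.inf (hΘ.sup j₁ j₂) (hΘ.sup j₁ j₃), hΘ.inf (hΘ.sup j₂ j₁) (hΘ.sup j₂ j₃),
    hΘ.inf (hΘ.sup j₃ j₁) (hΘ.sup j₃ j₂)⟩, hΘ.inf h₁ h₁', hΘ.inf h₂ h₂', hΘ.inf h₃ h₃'⟩

theorem componentwise_diag_iff {a b : L} : componentwise Θ (diag a) (diag b) ↔ Θ a b :=
  ⟨And.left, fun h => ⟨h, h, h⟩⟩

theorem eq_componentwise {Φ : BooleanTriples L → BooleanTriples L → Prop}
    (hΦ : IsLatticeCongruence Φ) (hΦΘ : ∀ a b, Φ (diag a) (diag b) ↔ Θ a b) :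
    Φ = componentwise Θ := by
  funext s t
  apply propext
  obtain ⟨w, hws, hwt⟩ : ∃ w, diag w ≤ s ∧ diag w ≤ t :=
    ⟨_, (map_inf diag _ _).trans_le inf_le_left |>.trans (diag_inf_le s),
      (map_inf diag _ _).trans_le inf_le_right |>.trans (diag_inf_le t)⟩
  obtain ⟨W, hsW, htW⟩ : ∃ W, s ≤ diag W ∧ t ≤ diag W :=
    ⟨_, (le_diag_sup s).trans ((map_sup diag _ _).trans_ge le_sup_left),
      (le_diag_sup t).trans ((map_sup diag _ _).trans_ge le_sup_right)⟩
  constructor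
  · intro h
    refine ⟨(hΦΘ _ _).1 ?_, (hΦΘ _ _).1 ?_, (hΦΘ _ _).1 ?_⟩
    · rw [diag_fst_eq s hws hsW, diag_fst_eq t hwt htW]
      exact hΦ.inf_sup_inf_sup_inf h _ _ _
    · rw [diag_snd_fst_eq s hws hsW, diag_snd_fst_eq t hwt htW]
      exact hΦ.inf_sup_inf_sup_inf h _ _ _
    · rw [diag_snd_snd_eq s hws hsW, diag_snd_snd_eq t hwt htW]
      exact hΦ.inf_sup_inf_sup_inf h _ _ _
  · rintro ⟨h₁, h₂, h₃⟩
    have hinf {a b : L} (hab : Θ a b) (e : BooleanTriples L) : Φ (diag a ⊓ e) (diag b ⊓ e) :=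
      hΦ.inf ((hΦΘ a b).2 hab) (hΦ.refl e)
    rw [eq_sup_diag_inf s hws hsW, eq_sup_diag_inf t hwt htW]
    exact hΦ.sup (hΦ.sup (hinf h₁ _) (hinf h₂ _)) (hinf h₃ _)

end Congruence

end BooleanTriple

open BooleanTriple in
/-- Every lattice with more than one element has a proper congruence-preserving
*extensive* extension: every element of the extension lies between two elements
of the image of `L`. -/
theorem proper_congruence_preserving_extensive_extension
    (L : Type u) [Lattice L] [Nontrivial L] :
    ∃ (K : Type u) (_ : Lattice K) (f : L → K),
      Function.Injective f ∧
      (∀ x y : L, f (x ⊔ y) = f x ⊔ f y) ∧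
      (∀ x y : L, f (x ⊓ y) = f x ⊓ f y) ∧
      ¬ Function.Surjective f ∧
      (∀ Θ : L → L → Prop, IsLatticeCongruence Θ →
        ∃! Φ : K → K → Prop,
          IsLatticeCongruence Φ ∧ ∀ x y : L, Φ (f x) (f y) ↔ Θ x y) ∧
      ∀ k : K, ∃ u v : L, f u ≤ k ∧ k ≤ f v := by
  refine ⟨BooleanTriples L, inferInstance, diag, diag_injective, map_sup diag, map_inf diag,
    not_surjective_diag, fun Θ hΘ => ?_, fun s => ⟨_, _, diag_inf_le s, le_diag_sup s⟩⟩
  exact ⟨componentwise Θ,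
    ⟨isLatticeCongruence_componentwise hΘ, fun _ _ => componentwise_diag_iff⟩,
    fun _ ⟨hΦ, hΦΘ⟩ => eq_componentwise hΦ hΦΘ⟩
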